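/- arXiv:2201.00001 — 2 statements merged into one kernel-verified Lean document; each statement's English description precedes it below -/
import Mathlib

section
/- Let n be a positive integer and consider a directed weighted graph on n nodes with weight matrix W. Then the following are equivalent: (i) every row of the graph advection operator L_adv sums to zero, i.e. for every node i, ∑_j (L_adv)_{ij} = 0; (ii) the graph is balanced, i.e. D_out = D_in; (iii) L_adv = L_cons. In other words, L_adv corresponds to a consistent (zero-th order accurate) semi-discrete finite difference advection scheme, whose coefficients at each node sum to zero, if and only if the graph is balanced, which holds if and only if the advection operator coincides with the consensus operator. -/
open Matrix BigOperators

/-- In-degree adjacency matrix: `A_in = W`. -/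
def Ain (n : ℕ) (W : Matrix (Fin n) (Fin n) ℝ) : Matrix (Fin n) (Fin n) ℝ := W

/-- Diagonal out-degree matrix: `(D_out) i i = ∑ j, W j i`. -/
def Dout (n : ℕ) (W : Matrix (Fin n) (Fin n) ℝ) : Matrix (Fin n) (Fin n) ℝ :=
  Matrix.diagonal (fun i => ∑ j, W j i)

/-- Diagonal in-degree matrix: `(D_in) i i = ∑ j, W i j`. -/
def Din (n : ℕ) (W : Matrix (Fin n) (Fin n) ℝ) : Matrix (Fin n) (Fin n) ℝ :=
  Matrix.diagonal (fun i => ∑ j, W i j)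

/-- Graph advection operator `L_adv = D_out - A_in`. -/
def Ladv (n : ℕ) (W : Matrix (Fin n) (Fin n) ℝ) : Matrix (Fin n) (Fin n) ℝ :=
  Dout n W - Ain n W

/-- Consensus operator `L_cons = D_in - A_in`. -/
def Lcons (n : ℕ) (W : Matrix (Fin n) (Fin n) ℝ) : Matrix (Fin n) (Fin n) ℝ :=
  Din n W - Ain n W

lemma rowsum (n : ℕ) (W : Matrix (Fin n) (Fin n) ℝ) (i : Fin n) :
    ∑ j, Ladv n W i j = (∑ j, W j i) - ∑ j, W i j := by
  simp [Ladv, Dout, Ain, Finset.sum_sub_distrib, Matrix.diagonal_apply,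
    Finset.sum_ite_eq' Finset.univ i]

/-- The rows of `L_adv` all sum to zero iff the graph is balanced iff `L_adv = L_cons`. -/
theorem stmt0 (n : ℕ) (hn : 0 < n) (W : Matrix (Fin n) (Fin n) ℝ) :
    ((∀ i, ∑ j, Ladv n W i j = 0) ↔ Dout n W = Din n W) ∧
    ((Dout n W = Din n W) ↔ Ladv n W = Lcons n W) := by
  have key : (Dout n W = Din n W) ↔ ∀ i, (∑ j, W j i) = ∑ j, W i j := by
    constructor
    · intro h i
      have := congrFun (congrFun h i) i
      simpa [Dout, Din, Matrix.diagonal_apply] using this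
    · intro h
      exact congrArg Matrix.diagonal (funext h)
  constructor
  · rw [key]
    constructor
    · intro h i; have := h i; rw [rowsum] at this; linarith
    · intro h i; rw [rowsum, h i]; ring
  · rw [key]
    constructor
    · intro h
      unfold Ladv Lcons Dout Din
      rw [funext h]
    · intro h i
      have := congrFun (congrFun h i) i
      simpa [Ladv, Lcons, Dout, Din, Matrix.diagonal_apply, sub_left_inj] using this
end

section
/- Let n ≥ 2, v > 0 and Δx > 0, and consider the directed loop graph on nodes indexed by ℤ/nℤ whose only edges are i → i+1 (mod n) with weight v/Δx. Then for every vector u indexed by ℤ/nℤ and every node i, the graph advection operator satisfies (L_adv u)_i = v (u_i − u_{i−1}) / Δx (indices mod n); that is, applying L_adv on the loop graph reproduces the first order upwind scheme for linear advection with periodic boundary conditions. -/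
open Matrix BigOperators

/-- Graph advection operator `L_adv = D_out - A_in` on a graph with nodes indexed by
`ZMod n`, where `A_in = W` and `(D_out) i i = ∑ j, W j i`. -/
def LadvZ (n : ℕ) [NeZero n] (W : Matrix (ZMod n) (ZMod n) ℝ) :
    Matrix (ZMod n) (ZMod n) ℝ :=
  Matrix.diagonal (fun i => ∑ j, W j i) - W

/-- Weight matrix of the directed loop graph on `ZMod n`: the only edges are
`i → i+1 (mod n)`, each with weight `v/Δx` (`W i j` is the weight of the edge
from `j` to `i`). -/
noncomputable def loopW (n : ℕ) (v Δx : ℝ) : Matrix (ZMod n) (ZMod n) ℝ :=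
  fun i j => if i = j + 1 then v / Δx else 0

section

variable {n : ℕ} [NeZero n]

theorem LadvZ_mulVec_apply (W : Matrix (ZMod n) (ZMod n) ℝ) (u : ZMod n → ℝ) (i : ZMod n) :
    (LadvZ n W *ᵥ u) i = (∑ j, W j i) * u i - (W *ᵥ u) i := by
  rw [LadvZ, sub_mulVec, Pi.sub_apply, mulVec_diagonal]

theorem sum_loopW_col (v Δx : ℝ) (i : ZMod n) : ∑ j, loopW n v Δx j i = v / Δx := by
  simp [loopW]

theorem loopW_mulVec_apply (v Δx : ℝ) (u : ZMod n → ℝ) (i : ZMod n) :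
    (loopW n v Δx *ᵥ u) i = v / Δx * u (i - 1) := by
  simp_rw [mulVec, dotProduct, loopW, eq_comm (a := i), ← eq_sub_iff_add_eq, ite_mul, zero_mul,
    Finset.sum_ite_eq', Finset.mem_univ, if_true]

end

theorem stmt8_general (n : ℕ) [NeZero n] (v Δx : ℝ)
    (u : ZMod n → ℝ) (i : ZMod n) :
    (LadvZ n (loopW n v Δx) *ᵥ u) i = v * (u i - u (i - 1)) / Δx := by
  rw [LadvZ_mulVec_apply, sum_loopW_col, loopW_mulVec_apply]
  ring

/-- On the directed loop graph, `L_adv` reproduces the first order upwind scheme with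
periodic boundary conditions: `(L_adv u)_i = v (u_i - u_{i-1}) / Δx` for every node. -/
theorem stmt8 (n : ℕ) [NeZero n] (hn : 2 ≤ n) (v Δx : ℝ) (hv : 0 < v) (hΔx : 0 < Δx)
    (u : ZMod n → ℝ) (i : ZMod n) :
    (LadvZ n (loopW n v Δx) *ᵥ u) i = v * (u i - u (i - 1)) / Δx :=
  stmt8_general n v Δx u i
end
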